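/- Fix x ∈ R^d, γ > 0, a convex function τ: R^d → R, λ > 0, and concave differentiable g: R^d → R. The fixed points of the iteration y ↦ x + prox_{(λγ/(λ+1))τ}((y - x + λ∇g(y))/(1+λ)) are exactly the minimizers of F(y) = (1/2)‖x-y‖² + γτ(x-y) - g(y), assuming τ is differentiable and τ(z)=τ(-z). -/

import Mathlib

/-!
At a point `y`, the gradient of `F` is `(y - x) + γ ∇τ(y - x) - ∇g(y)` (evenness of `τ` lets us
write `τ (x - y) = τ (y - x)`), while the optimality condition of the proximal problem at
`z = y - x` reads `z + σ ∇τ(z) = (y - x + λ ∇g(y)) / (1 + λ)`; the difference of the two sides of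
the latter is `λ / (1 + λ)` times the former. The proximal point is the unique solution of its
optimality condition, because `z ↦ z + σ ∇τ(z)` is injective by monotonicity of `∇τ`, and the
minimizers of the convex function `F` are exactly its critical points.
-/

open InnerProductSpace Set
open scoped Gradient

theorem convexOn_half_norm_sub_sq {E : Type*} [SeminormedAddCommGroup E] [NormedSpace ℝ E]
    (c : E) : ConvexOn ℝ univ (fun w => (1 / 2 : ℝ) * ‖c - w‖ ^ 2) := by
  have h := ((convexOn_univ_dist c).pow (fun _ _ => dist_nonneg) 2).smul
    (c := (1 / 2 : ℝ)) (by norm_num)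
  simpa [dist_eq_norm, norm_sub_rev] using h

section GradientCalculus

variable {𝕜 E : Type*} [RCLike 𝕜] [NormedAddCommGroup E] [InnerProductSpace 𝕜 E] [CompleteSpace E]
  {f g : E → 𝕜} {f' g' a : E}

theorem HasGradientAt.add (hf : HasGradientAt f f' a) (hg : HasGradientAt g g' a) :
    HasGradientAt (fun w => f w + g w) (f' + g') a := by
  rw [hasGradientAt_iff_hasFDerivAt] at *
  rw [map_add]
  exact hf.add hg

theorem HasGradientAt.sub (hf : HasGradientAt f f' a) (hg : HasGradientAt g g' a) :
    HasGradientAt (fun w => f w - g w) (f' - g') a := by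
  rw [hasGradientAt_iff_hasFDerivAt] at *
  rw [map_sub]
  exact hf.sub hg

theorem HasGradientAt.comp_sub_const (c : E) (hf : HasGradientAt f f' (a - c)) :
    HasGradientAt (fun w => f (w - c)) f' a := by
  rw [hasGradientAt_iff_hasFDerivAt] at *
  exact (hasFDerivAt_comp_sub c).2 hf

end GradientCalculus

section RealGradient

variable {E : Type*} [NormedAddCommGroup E] [InnerProductSpace ℝ E] [CompleteSpace E]
  {f : E → ℝ} {s : Set E} {f' fa fb a b : E}

theorem HasGradientAt.const_mul (c : ℝ) (hf : HasGradientAt f f' a) :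
    HasGradientAt (fun w => c * f w) (c • f') a := by
  rw [hasGradientAt_iff_hasFDerivAt] at *
  simpa [map_smul] using hf.const_mul c

theorem hasGradientAt_half_norm_sub_sq (c a : E) :
    HasGradientAt (fun w => (1 / 2 : ℝ) * ‖c - w‖ ^ 2) (a - c) a := by
  rw [hasGradientAt_iff_hasFDerivAt]
  refine ((((hasFDerivAt_id a).const_sub c).norm_sq).const_mul (1 / 2 : ℝ)).congr_fderiv ?_
  ext u
  simp

theorem IsLocalMin.hasGradientAt_eq_zero (hm : IsLocalMin f a) (h : HasGradientAt f f' a) :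
    f' = 0 :=
  (toDual ℝ E).injective <| by simpa using hm.hasFDerivAt_eq_zero h.hasFDerivAt

theorem ConvexOn.add_inner_le_of_hasGradientAt (hf : ConvexOn ℝ s f) (ha : a ∈ s) (hb : b ∈ s)
    (h : HasGradientAt f f' a) : f a + ⟪f', b - a⟫_ℝ ≤ f b := by
  let L : ℝ →ᵃ[ℝ] E := AffineMap.lineMap a b
  have hd : HasDerivAt (f ∘ L) ⟪f', b - a⟫_ℝ 0 := by
    have hfL : HasFDerivAt f (toDual ℝ E f') (L 0) := by simpa [L] using h.hasFDerivAt
    simpa using hfL.comp_hasDerivAt 0 AffineMap.hasDerivAt_lineMap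
  have hslope := (hf.comp_affineMap L).le_slope_of_hasDerivAt (x := 0) (y := 1)
    (by simpa [L] using ha) (by simpa [L] using hb) one_pos hd
  simp only [slope_def_field, Function.comp_apply, AffineMap.lineMap_apply_one,
    AffineMap.lineMap_apply_zero, sub_zero, div_one, L] at hslope
  linarith

theorem ConvexOn.inner_sub_nonneg_of_hasGradientAt (hf : ConvexOn ℝ s f) (ha : a ∈ s)
    (hb : b ∈ s) (hfa : HasGradientAt f fa a) (hfb : HasGradientAt f fb b) :
    0 ≤ ⟪fa - fb, a - b⟫_ℝ := by
  have h₁ := hf.add_inner_le_of_hasGradientAt ha hb hfa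
  have h₂ := hf.add_inner_le_of_hasGradientAt hb ha hfb
  rw [← neg_sub a b, inner_neg_right] at h₁
  rw [inner_sub_left]
  linarith

theorem ConvexOn.eq_of_add_smul_eq_of_hasGradientAt (hf : ConvexOn ℝ s f) (ha : a ∈ s)
    (hb : b ∈ s) {σ : ℝ} (hσ : 0 ≤ σ) (hfa : HasGradientAt f fa a) (hfb : HasGradientAt f fb b)
    (h : a + σ • fa = b + σ • fb) : a = b := by
  have hab : a - b = -(σ • (fa - fb)) := by
    rw [smul_sub]
    linear_combination (norm := module) h
  have hsq : ‖a - b‖ ^ 2 ≤ 0 :=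
    calc ‖a - b‖ ^ 2 = ⟪a - b, a - b⟫_ℝ := (real_inner_self_eq_norm_sq _).symm
      _ = -(σ * ⟪fa - fb, a - b⟫_ℝ) := by
        nth_rewrite 1 [hab]
        rw [inner_neg_left, real_inner_smul_left]
      _ ≤ 0 := neg_nonpos.2 <| mul_nonneg hσ <|
        hf.inner_sub_nonneg_of_hasGradientAt ha hb hfa hfb
  rw [← sub_eq_zero, ← norm_eq_zero]
  nlinarith [norm_nonneg (a - b)]

theorem ConvexOn.isMinOn_univ_iff_of_hasGradientAt (hf : ConvexOn ℝ univ f)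
    (h : HasGradientAt f f' a) : IsMinOn f univ a ↔ f' = 0 := by
  refine ⟨fun hm => (hm.isLocalMin Filter.univ_mem).hasGradientAt_eq_zero h, ?_⟩
  rintro rfl b -
  simpa using hf.add_inner_le_of_hasGradientAt (mem_univ a) (mem_univ b) h

end RealGradient

/-- Fixed points of y ↦ x + prox_{(λγ/(λ+1))τ}((y - x + λ∇g(y))/(1+λ)) are exactly
the minimizers of F(y) = ½‖x-y‖² + γτ(x-y) - g(y). -/
theorem stmt_19 {d : ℕ} (x : EuclideanSpace ℝ (Fin d)) (γ lam : ℝ)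
    (hγ : 0 < γ) (hlam : 0 < lam)
    (τ : EuclideanSpace ℝ (Fin d) → ℝ) (hτconv : ConvexOn ℝ Set.univ τ)
    (hτdiff : Differentiable ℝ τ) (hτeven : ∀ z, τ (-z) = τ z)
    (g : EuclideanSpace ℝ (Fin d) → ℝ) (hg : ConcaveOn ℝ Set.univ g)
    (gradg : EuclideanSpace ℝ (Fin d) → EuclideanSpace ℝ (Fin d))
    (hgd : ∀ y, HasGradientAt g (gradg y) y) :
    let σ : ℝ := lam * γ / (lam + 1)
    let F : EuclideanSpace ℝ (Fin d) → ℝ := fun y =>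
      (1 / 2) * ‖x - y‖ ^ 2 + γ * τ (x - y) - g y
    ∀ y zstar : EuclideanSpace ℝ (Fin d),
      (∀ z, (1 / 2) * ‖(1 / (1 + lam)) • (y - x + lam • gradg y) - zstar‖ ^ 2 + σ * τ zstar ≤
            (1 / 2) * ‖(1 / (1 + lam)) • (y - x + lam • gradg y) - z‖ ^ 2 + σ * τ z) →
      (y = x + zstar ↔ ∀ y', F y ≤ F y') := by
  intro σ F y zstar hprox
  set v := (1 / (1 + lam)) • (y - x + lam • gradg y)
  have hT (z) : HasGradientAt τ (∇ τ z) z := (hτdiff z).hasGradientAt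
  have hzstar : zstar + σ • ∇ τ zstar = v := by
    have := IsLocalMin.hasGradientAt_eq_zero (Filter.Eventually.of_forall hprox)
      ((hasGradientAt_half_norm_sub_sq v zstar).add ((hT zstar).const_mul σ))
    linear_combination (norm := module) this
  have hFeq : F = fun w => (1 / 2) * ‖x - w‖ ^ 2 + γ * τ (w - x) - g w := by
    funext w
    rw [← hτeven (w - x), neg_sub]
  have hFgrad : HasGradientAt F ((y - x) + γ • ∇ τ (y - x) - gradg y) y := by
    rw [hFeq]
    exact ((hasGradientAt_half_norm_sub_sq x y).add
      (((hT (y - x)).comp_sub_const x).const_mul γ)).sub (hgd y)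
  have hFconv : ConvexOn ℝ univ F := by
    rw [hFeq]
    have hτx : ConvexOn ℝ univ (fun w => γ * τ (w - x)) := by
      simpa [sub_eq_neg_add] using (hτconv.translate_right (-x)).smul hγ.le
    exact ((convexOn_half_norm_sub_sq x).add hτx).sub hg
  have hscale : (y - x) + σ • ∇ τ (y - x) - v =
      (lam / (1 + lam)) • ((y - x) + γ • ∇ τ (y - x) - gradg y) := by
    simp only [σ, v]
    match_scalars <;> field_simp <;> ring
  calc y = x + zstar ↔ y - x = zstar := sub_eq_iff_eq_add'.symm
    _ ↔ (y - x) + σ • ∇ τ (y - x) = v :=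
      ⟨fun h => h ▸ hzstar, fun h => hτconv.eq_of_add_smul_eq_of_hasGradientAt (mem_univ _)
        (mem_univ _) (by positivity) (hT _) (hT _) (h.trans hzstar.symm)⟩
    _ ↔ (y - x) + γ • ∇ τ (y - x) - gradg y = 0 := by
      rw [← sub_eq_zero, hscale, smul_eq_zero, or_iff_right (by positivity)]
    _ ↔ ∀ y', F y ≤ F y' :=
      (hFconv.isMinOn_univ_iff_of_hasGradientAt hFgrad).symm.trans isMinOn_univ_iff
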